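/- Let z be a nonzero complex number, and let P, Q, φ, ρ : ℤ → ℂ with P(n) ≠ 0 and ρ(n) ≠ 0 for all n. Suppose φ satisfies the spectral problem φ(n+1) − P(n)φ(n) = z(φ(n) − Q(n)φ(n−1)) for all n, and ρ satisfies the gauge condition ρ(n)Q(n) = ρ(n−1)P(n) for all n. Then ψ(n) = ρ(n)φ(n) satisfies ψ(n−1) − P̂(n)ψ(n) = z⁻¹(ψ(n) − Q̂(n)ψ(n+1)) for all n, where P̂(n) = 1/P(n) and Q̂(n) = Q(n+1)/(P(n)P(n+1)). That is, the gauge transformation ψ = ρφ maps the Ablowitz–Ladik spectral problem with data (P, Q, z) to the spectral problem with reversed shift, data (P̂, Q̂), and spectral parameter z⁻¹. -/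

import Mathlib

/-!
The gauge condition at `n + 1` turns `Q̂(n) ρ(n+1)` into `ρ(n) / P(n)`, so the right-hand side of
the reversed problem becomes `-(ρ(n) / P(n)) · z⁻¹ (φ(n+1) − P(n) φ(n))`. The original spectral
problem replaces `z⁻¹ (φ(n+1) − P(n) φ(n))` by `φ(n) − Q(n) φ(n−1)`, and the gauge condition
at `n` turns `ρ(n) Q(n) / P(n)` into `ρ(n−1)`.
-/

section GaugeTransformation

variable {K : Type*} [Field K] {P Q φ ρ : ℤ → K} {n : ℤ}

theorem qHat_mul_succ_of_gauge (hPsucc : P (n + 1) ≠ 0)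
    (hgauge : ρ (n + 1) * Q (n + 1) = ρ n * P (n + 1)) :
    Q (n + 1) / (P n * P (n + 1)) * ρ (n + 1) = ρ n / P n := by
  rw [div_mul_eq_mul_div, mul_comm (Q _), hgauge, mul_div_mul_right _ _ hPsucc]

theorem gauge_step_reversed_spectral {z : K} (hz : z ≠ 0) (hP : P n ≠ 0)
    (hPsucc : P (n + 1) ≠ 0)
    (hspec : φ (n + 1) - P n * φ n = z * (φ n - Q n * φ (n - 1)))
    (hgauge : ρ n * Q n = ρ (n - 1) * P n)
    (hgauge_succ : ρ (n + 1) * Q (n + 1) = ρ n * P (n + 1)) :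
    ρ (n - 1) * φ (n - 1) - 1 / P n * (ρ n * φ n) =
      z⁻¹ * (ρ n * φ n - Q (n + 1) / (P n * P (n + 1)) * (ρ (n + 1) * φ (n + 1))) := by
  have hρ_pred : ρ (n - 1) = ρ n * Q n / P n := by rw [hgauge, mul_div_cancel_right₀ _ hP]
  calc ρ (n - 1) * φ (n - 1) - 1 / P n * (ρ n * φ n)
      = -(ρ n / P n) * (φ n - Q n * φ (n - 1)) := by rw [hρ_pred]; ring
    _ = -(ρ n / P n) * (z⁻¹ * (φ (n + 1) - P n * φ n)) := by
        rw [hspec, inv_mul_cancel_left₀ hz]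
    _ = z⁻¹ * (ρ n * φ n - ρ n / P n * φ (n + 1)) := by field_simp; ring
    _ = z⁻¹ * (ρ n * φ n - Q (n + 1) / (P n * P (n + 1)) * (ρ (n + 1) * φ (n + 1))) := by
        rw [← mul_assoc, qHat_mul_succ_of_gauge hPsucc hgauge_succ]

end GaugeTransformation

theorem gauge_transformation_spectral_problem
    (z : ℂ) (hz : z ≠ 0) (P Q φ ρ : ℤ → ℂ)
    (hP : ∀ n : ℤ, P n ≠ 0)
    (hspec : ∀ n : ℤ, φ (n + 1) - P n * φ n = z * (φ n - Q n * φ (n - 1)))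
    (hgauge : ∀ n : ℤ, ρ n * Q n = ρ (n - 1) * P n)
    (ψ Phat Qhat : ℤ → ℂ)
    (hψ : ∀ n : ℤ, ψ n = ρ n * φ n)
    (hPhat : ∀ n : ℤ, Phat n = 1 / P n)
    (hQhat : ∀ n : ℤ, Qhat n = Q (n + 1) / (P n * P (n + 1))) :
    ∀ n : ℤ, ψ (n - 1) - Phat n * ψ n = z⁻¹ * (ψ n - Qhat n * ψ (n + 1)) := by
  intro n
  rw [hψ, hψ, hψ, hPhat, hQhat]
  exact gauge_step_reversed_spectral hz (hP n) (hP (n + 1)) (hspec n) (hgauge n)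
    (by simpa using hgauge (n + 1))
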